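/- For every operator monotone function f : (0,∞) → ℝ that is symmetric (f(t) = t·f(1/t) for all t > 0) and normalized (f(1) = 1), the inequality 2t/(1+t) ≤ f(t) ≤ (1+t)/2 holds for all t > 0. -/

import Mathlib

open Matrix ComplexOrder

open Classical in
noncomputable def msqrt {n : ℕ} (A : Matrix (Fin n) (Fin n) ℂ) : Matrix (Fin n) (Fin n) ℂ :=
  if h : A.PosSemidef then (h.1.eigenvectorUnitary : Matrix (Fin n) (Fin n) ℂ) *
    diagonal ((↑) ∘ Real.sqrt ∘ h.1.eigenvalues) * (star h.1.eigenvectorUnitary : Matrix (Fin n) (Fin n) ℂ) else 0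

noncomputable def geoMean {n : ℕ} (ρ₀ ρ₁ : Matrix (Fin n) (Fin n) ℂ) : Matrix (Fin n) (Fin n) ℂ :=
  msqrt ρ₀ * msqrt ((msqrt ρ₀)⁻¹ * ρ₁ * (msqrt ρ₀)⁻¹) * msqrt ρ₀

noncomputable def frobNorm {n : ℕ} (X : Matrix (Fin n) (Fin n) ℂ) : ℝ :=
  Real.sqrt (Matrix.trace (Xᴴ * X)).re

/-- A function `f : ℝ → ℝ` is operator monotone on `(0,∞)` if for all Hermitian complex
matrices of any size with spectra in `(0,∞)` (i.e. positive definite), `A ≤ B` in the Loewner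
order implies `f(A) ≤ f(B)`, where `f` is applied via the functional calculus. -/
def OperatorMonotoneOnPos (f : ℝ → ℝ) : Prop :=
  ∀ (m : ℕ) (A B : Matrix (Fin m) (Fin m) ℂ) (hA : A.PosDef) (hB : B.PosDef),
    (B - A).PosSemidef → (hB.1.cfc f - hA.1.cfc f).PosSemidef

noncomputable def mat2 (a k b : ℝ) : Matrix (Fin 2) (Fin 2) ℂ :=
  !![(a : ℂ), (k : ℂ); (k : ℂ), (b : ℂ)]

lemma herm2 (a k b : ℝ) : (mat2 a k b).IsHermitian := by
  ext i j
  fin_cases i <;> fin_cases j <;>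
    simp [mat2, Matrix.conjTranspose_apply, Complex.conj_ofReal]

lemma quadform (a k b : ℝ) (x : Fin 2 → ℂ) :
    dotProduct (star x) ((mat2 a k b) *ᵥ x) =
      ((a * ((x 0).re^2 + (x 0).im^2) + 2*k*((x 0).re*(x 1).re + (x 0).im*(x 1).im)
        + b * ((x 1).re^2 + (x 1).im^2) : ℝ) : ℂ) := by
  simp [mat2, dotProduct, Matrix.mulVec, Fin.sum_univ_two, Complex.ext_iff,
    Complex.add_re, Complex.add_im, Complex.mul_re, Complex.mul_im]
  simp only [← Complex.ofReal_pow, Complex.ofReal_re, Complex.ofReal_im]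
  constructor <;> ring

lemma psd2 {a k b : ℝ} (ha : 0 ≤ a) (hb : 0 ≤ b) (hk : k^2 ≤ a*b) :
    (mat2 a k b).PosSemidef := by
  refine Matrix.PosSemidef.of_dotProduct_mulVec_nonneg (herm2 a k b) (fun x => ?_)
  rw [quadform]
  rw [Complex.zero_le_real]
  set p := (x 0).re; set q := (x 0).im; set r := (x 1).re; set t := (x 1).im
  rcases eq_or_lt_of_le ha with h0 | h0
  · have hk0 : k = 0 := by nlinarith [sq_nonneg k]
    rw [hk0, ← h0]
    nlinarith [sq_nonneg r, sq_nonneg t]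
  · nlinarith [sq_nonneg (a*p + k*r), sq_nonneg (a*q + k*t), sq_nonneg r, sq_nonneg t,
      mul_nonneg (mul_nonneg (sub_nonneg.mpr hk) (sq_nonneg r)) ha]

lemma quadpos {a k b : ℝ} (ha : 0 < a) (hk : k^2 < a*b) (p q r t : ℝ)
    (h : p ≠ 0 ∨ q ≠ 0 ∨ r ≠ 0 ∨ t ≠ 0) :
    0 < a*(p^2+q^2) + 2*k*(p*r+q*t) + b*(r^2+t^2) := by
  have h1 : 0 < (a*p+k*r)^2 + (a*q+k*t)^2 + (a*b-k^2)*(r^2+t^2) := by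
    rcases eq_or_ne r 0 with hr | hr
    · rcases eq_or_ne t 0 with ht | ht
      · subst hr; subst ht
        have hpq : p ≠ 0 ∨ q ≠ 0 := by tauto
        rcases hpq with h' | h'
        · have : 0 < (a*p)^2 := by positivity
          nlinarith [sq_nonneg (a*q)]
        · have : 0 < (a*q)^2 := by positivity
          nlinarith [sq_nonneg (a*p)]
      · have h2 : 0 < t^2 := by positivity
        nlinarith [sq_nonneg (a*p+k*r), sq_nonneg (a*q+k*t), sq_nonneg r,
          mul_pos (sub_pos.mpr hk) h2]
    · have h2 : 0 < r^2 := by positivity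
      nlinarith [sq_nonneg (a*p+k*r), sq_nonneg (a*q+k*t), sq_nonneg t,
        mul_pos (sub_pos.mpr hk) h2]
  nlinarith [h1]

lemma pd2 {a k b : ℝ} (ha : 0 < a) (hk : k^2 < a*b) :
    (mat2 a k b).PosDef := by
  refine Matrix.PosDef.of_dotProduct_mulVec_pos (herm2 a k b) (fun x hx => ?_)
  rw [quadform, Complex.zero_lt_real]
  have hx' : (x 0).re ≠ 0 ∨ (x 0).im ≠ 0 ∨ (x 1).re ≠ 0 ∨ (x 1).im ≠ 0 := by
    by_contra hcon
    push_neg at hcon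
    obtain ⟨h1, h2, h3, h4⟩ := hcon
    apply hx
    funext i
    fin_cases i <;>
      · apply Complex.ext <;> simp_all
  exact quadpos ha hk _ _ _ _ hx'

lemma quad2 {a k b : ℝ} (h : (mat2 a k b).PosSemidef) (v w : ℝ) :
    0 ≤ a*v^2 + 2*k*v*w + b*w^2 := by
  have := h.dotProduct_mulVec_nonneg ![(v : ℂ), (w : ℂ)]
  rw [quadform] at this
  rw [Complex.zero_le_real] at this
  have h2 : a * v ^ 2 + 2 * k * v * w + b * w ^ 2 = a * v ^ 2 + 2 * k * (v * w) + b * w ^ 2 := by ring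
  rw [h2]
  simpa using this

noncomputable def rotM (c s α β : ℝ) : Matrix (Fin 2) (Fin 2) ℂ :=
  mat2 (c^2*α + s^2*β) (c*s*(α - β)) (s^2*α + c^2*β)

lemma mat2_sub (a k b a' k' b' : ℝ) :
    mat2 a k b - mat2 a' k' b' = mat2 (a-a') (k-k') (b-b') := by
  ext i j
  fin_cases i <;> fin_cases j <;> simp [mat2] <;> push_cast <;> ring

lemma spec_rot {c s α β : ℝ} (hcs : c^2 + s^2 = 1) :
    ∀ x ∈ spectrum ℝ (rotM c s α β), x = α ∨ x = β := by
  intro x hx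
  rw [spectrum.mem_iff] at hx
  have hdet : det (algebraMap ℝ (Matrix (Fin 2) (Fin 2) ℂ) x - rotM c s α β) = 0 := by
    by_contra hd
    exact hx ((Matrix.isUnit_iff_isUnit_det _).mpr (isUnit_iff_ne_zero.mpr hd))
  rw [Matrix.det_fin_two] at hdet
  simp only [rotM, mat2, Matrix.sub_apply, Matrix.algebraMap_matrix_apply,
    Matrix.cons_val', Matrix.cons_val_zero, Matrix.cons_val_one, Matrix.head_cons,
    Matrix.head_fin_const, Matrix.empty_val', Matrix.cons_val_fin_one, Matrix.of_apply,
    if_true, if_false, one_ne_zero, zero_ne_one, reduceIte] at hdet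
  have hc : ((c:ℂ)^2 + (s:ℂ)^2) = 1 := by exact_mod_cast congrArg (Complex.ofReal) hcs
  have key : ((x:ℂ) - α) * ((x:ℂ) - β) = 0 := by
    have halg : algebraMap ℝ ℂ x = (x : ℂ) := rfl
    rw [halg] at hdet
    push_cast at hdet ⊢
    linear_combination hdet + ((α+β)*(x:ℂ) - α*β*((c:ℂ)^2+(s:ℂ)^2+1)) * hc
  rcases mul_eq_zero.mp key with h | h
  · left; exact_mod_cast sub_eq_zero.mp h
  · right; exact_mod_cast sub_eq_zero.mp h

lemma rot_affine (c s α β r q : ℝ) (hcs : c^2 + s^2 = 1) :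
    rotM c s (r*α+q) (r*β+q) =
      r • rotM c s α β + q • (1 : Matrix (Fin 2) (Fin 2) ℂ) := by
  have hc : ((c:ℂ)^2 + (s:ℂ)^2) = 1 := by exact_mod_cast congrArg (Complex.ofReal) hcs
  ext i j
  fin_cases i <;> fin_cases j <;>
    · simp [rotM, mat2, Matrix.one_apply, Complex.real_smul]
      push_cast
      first
      | linear_combination (2*(q:ℂ)) * hc
      | linear_combination (q:ℂ) * hc
      | linear_combination -(q:ℂ) * hc
      | ring

lemma cfc_rot (f : ℝ → ℝ) {c s α β : ℝ} (hcs : c^2 + s^2 = 1) (hab : α ≠ β)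
    (hM : (rotM c s α β).IsHermitian) :
    hM.cfc f = rotM c s (f α) (f β) := by
  rw [← Matrix.IsHermitian.cfc_eq]
  have hsa : IsSelfAdjoint (rotM c s α β) := hM
  set r := (f β - f α)/(β - α) with hr
  set q := f α - r * α with hq
  have hfa : f α = r * α + q := by rw [hq]; ring
  have hfb : f β = r * β + q := by
    rw [hq, hr]
    have : β - α ≠ 0 := sub_ne_zero.mpr (Ne.symm hab)
    field_simp
    ring
  have h1 : cfc f (rotM c s α β) = cfc (fun x => r * x + q) (rotM c s α β) := by
    apply cfc_congr
    intro x hx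
    rcases spec_rot hcs x hx with rfl | rfl
    · exact hfa
    · exact hfb
  rw [h1]
  rw [cfc_add_const q (fun x => r * x) _ (by fun_prop) hsa]
  rw [show (fun x : ℝ => r * x) = (r * ·) from rfl, cfc_const_mul_id r _ hsa]
  rw [hfa, hfb, rot_affine c s α β r q hcs]
  congr 1
  ext i j
  by_cases h : i = j <;>
    simp [h, Matrix.algebraMap_matrix_apply, Matrix.one_apply, Complex.real_smul]

lemma mono2 (f : ℝ → ℝ) (hm : OperatorMonotoneOnPos f) {c s α β c' s' α' β' : ℝ}
    (hcs : c^2+s^2=1) (hcs' : c'^2+s'^2=1) (hαβ : α ≠ β) (hαβ' : α' ≠ β')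
    (hA : (rotM c s α β).PosDef) (hB : (rotM c' s' α' β').PosDef)
    (hsub : (rotM c' s' α' β' - rotM c s α β).PosSemidef) :
    (rotM c' s' (f α') (f β') - rotM c s (f α) (f β)).PosSemidef := by
  have := hm 2 _ _ hA hB hsub
  rwa [cfc_rot f hcs' hαβ' hB.1, cfc_rot f hcs hαβ hA.1] at this

lemma rotM_eq (c s α β : ℝ) :
    rotM c s α β = mat2 (c^2*α + s^2*β) (c*s*(α - β)) (s^2*α + c^2*β) := rfl

lemma rot10 (α β : ℝ) : rotM 1 0 α β = mat2 α 0 β := by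
  rw [rotM_eq]
  congr 1 <;> ring

lemma pd_rot {c s α β : ℝ} (hcs : c^2 + s^2 = 1) (hc : c ≠ 0) (hα : 0 < α) (hβ : 0 < β) :
    (rotM c s α β).PosDef := by
  rw [rotM_eq]
  apply pd2
  · have h2 : 0 < c^2 := by positivity
    nlinarith [sq_nonneg s, mul_pos h2 hα, mul_nonneg (sq_nonneg s) hβ.le]
  · have key : (c^2*α + s^2*β) * (s^2*α + c^2*β) - (c*s*(α - β))^2 = α*β*(c^2+s^2)^2 := by
      ring
    rw [hcs, one_pow, mul_one] at key
    nlinarith [mul_pos hα hβ]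

-- scalar monotonicity
lemma scalar_mono (f : ℝ → ℝ) (hm : OperatorMonotoneOnPos f) {x z : ℝ}
    (hx : 0 < x) (hxz : x < z) : f x ≤ f z := by
  have hone : (1:ℝ)^2 + (0:ℝ)^2 = 1 := by norm_num
  have hAx : (rotM 1 0 x (x/2)).PosDef := pd_rot hone one_ne_zero hx (by linarith)
  have hBz : (rotM 1 0 z (x/2)).PosDef := pd_rot hone one_ne_zero (by linarith) (by linarith)
  have hsub : (rotM 1 0 z (x/2) - rotM 1 0 x (x/2)).PosSemidef := by
    rw [rot10, rot10, mat2_sub]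
    apply psd2 (by linarith) (by norm_num)
    norm_num
  have := mono2 f hm hone hone (by linarith : x ≠ x/2) (by linarith : z ≠ x/2) hAx hBz hsub
  rw [rot10, rot10, mat2_sub] at this
  have q := quad2 this 1 0
  nlinarith [q]

lemma scalar_pos (f : ℝ → ℝ) (hm : OperatorMonotoneOnPos f)
    (hsymm : ∀ t : ℝ, 0 < t → f t = t * f t⁻¹) (hnorm : f 1 = 1) {x : ℝ} (hx : 0 < x) :
    0 < f x := by
  rcases lt_trichotomy x 1 with h | h | h
  · have h1 : 1 < x⁻¹ := by
      rw [lt_inv_comm₀] <;> simp [hx, h]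
    have h2 : (1:ℝ) ≤ f x⁻¹ := hnorm ▸ scalar_mono f hm one_pos h1
    have := hsymm x hx
    nlinarith
  · rw [h, hnorm]; norm_num
  · have := scalar_mono f hm one_pos h
    rw [hnorm] at this
    linarith

set_option maxHeartbeats 1000000 in
lemma upper_core (f : ℝ → ℝ) (hm : OperatorMonotoneOnPos f)
    {y cc : ℝ} (hy : 1 < y) (hcc : 0 < cc) (hcc2 : cc < 1/(1+y)) (hnorm : f 1 = 1) :
    cc * f y + (1 - cc) * f y⁻¹ ≤ 1 := by
  have hy0 : (0:ℝ) < y := by linarith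
  have hyinv : 0 < y⁻¹ := by positivity
  have hcc1 : cc < 1 := by
    have : 1/(1+y) < 1 := by rw [div_lt_one] <;> linarith
    linarith
  set c := Real.sqrt cc with hc
  set s := Real.sqrt (1 - cc) with hs
  have hc2 : c^2 = cc := Real.sq_sqrt hcc.le
  have hs2 : s^2 = 1 - cc := Real.sq_sqrt (by linarith)
  have hcpos : 0 < c := Real.sqrt_pos.mpr hcc
  have hspos : 0 < s := Real.sqrt_pos.mpr (by linarith)
  have hcs : c^2 + s^2 = 1 := by rw [hc2, hs2]; ring
  obtain ⟨e, he_def⟩ : ∃ e : ℝ, e = 1 - y*cc - (1-cc)/y := ⟨_, rfl⟩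
  have he : 0 < e := by
    have h1 : y * e = (y-1)*(1 - cc*(1+y)) := by
      rw [he_def]
      field_simp
      ring
    have h2 : 0 < 1 - cc*(1+y) := by
      have : cc * (1+y) < (1/(1+y)) * (1+y) := by
        apply mul_lt_mul_of_pos_right hcc2
        linarith
      rw [one_div_mul_cancel (by linarith : (1:ℝ)+y ≠ 0)] at this
      linarith
    nlinarith [mul_pos (by linarith : (0:ℝ) < y - 1) h2]
  obtain ⟨b, hb_def⟩ : ∃ b : ℝ, b = (y+2)/e + y/(1-cc) + 1/(y*cc) := ⟨_, rfl⟩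
  have hbp1 : 0 < (y+2)/e := div_pos (by linarith) he
  have hbp2 : y/(1-cc) ≥ y := by
    rw [ge_iff_le, le_div_iff₀ (by linarith)]
    nlinarith
  have hbp2' : 0 < y/(1-cc) := div_pos hy0 (by linarith)
  have hbp3 : 0 < 1/(y*cc) := by positivity
  have hb1 : 1 < b := by rw [hb_def]; nlinarith
  have hb0 : 0 < b := by linarith
  have hsb : (1 - cc) * b ≥ y := by
    have hc1 : (0:ℝ) < 1 - cc := by linarith
    have h1 : (1-cc) * b = (1-cc)*((y+2)/e) + (1-cc)*(y/(1-cc)) + (1-cc)*(1/(y*cc)) := by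
      rw [hb_def]; ring
    have h2 : (1-cc) * (y/(1-cc)) = y := by field_simp
    rw [h1, h2]
    nlinarith [mul_pos hc1 hbp1, mul_pos hc1 hbp3]
  have hcb : cc * b ≥ 1/y := by
    have h1 : cc * b = cc*((y+2)/e) + cc*(y/(1-cc)) + cc*(1/(y*cc)) := by
      rw [hb_def]; ring
    have h2 : cc * (1/(y*cc)) = 1/y := by field_simp
    rw [h1, h2]
    nlinarith [mul_pos hcc hbp1, mul_pos hcc hbp2']
  have hbe : b * e ≥ y + 2 := by
    have h1 : b * e = ((y+2)/e)*e + (y/(1-cc))*e + (1/(y*cc))*e := by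
      rw [hb_def]; ring
    have h2 : ((y+2)/e) * e = y + 2 := by field_simp
    rw [h1, h2]
    nlinarith [mul_pos hbp2' he, mul_pos hbp3 he]
  have hsub : (rotM c s 1 b - rotM 1 0 y y⁻¹).PosSemidef := by
    rw [rot10, rotM_eq, mat2_sub]
    have ha' : 0 ≤ c^2*1 + s^2*b - y := by rw [hc2, hs2]; nlinarith
    have hb' : 0 ≤ s^2*1 + c^2*b - y⁻¹ := by
      rw [hc2, hs2]
      have : y⁻¹ = 1/y := by rw [one_div]
      nlinarith
    apply psd2 ha' hb'
    have key : (c^2*1 + s^2*b - y) * (s^2*1 + c^2*b - y⁻¹) - (c*s*(1-b) - 0)^2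
        = b * e + (1 - cc/y - y*(1-cc)) := by
      have e1 : (c*s*(1-b) - 0)^2 = cc*(1-cc)*(1-b)^2 := by
        rw [← hs2, ← hc2]; ring
      rw [e1, hc2, hs2, he_def]
      field_simp
      ring
    have he0 : 1 - cc/y - y*(1-cc) ≥ -(y+2) := by
      have h1 : cc/y ≤ 1 := by
        rw [div_le_one hy0]; linarith
      nlinarith
    linarith [key, hbe, he0]
  have hA : (rotM c s 1 b).PosDef := pd_rot hcs (ne_of_gt hcpos) one_pos hb0
  have hB : (rotM 1 0 y y⁻¹).PosDef := pd_rot (by norm_num) one_ne_zero hy0 hyinv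
  have hyy : y ≠ y⁻¹ := by
    have : y⁻¹ < 1 := inv_lt_one_of_one_lt₀ hy
    linarith
  have hres := mono2 f hm (by norm_num : (1:ℝ)^2+(0:ℝ)^2 = 1) hcs hyy
    (by linarith : (1:ℝ) ≠ b) hB hA hsub
  rw [rot10, rotM_eq, mat2_sub, hnorm] at hres
  have q := quad2 hres c s
  have e2 : (c*s*(1 - f b) - 0) * c * s = cc*(1-cc)*(1 - f b) := by
    rw [← hs2, ← hc2]; ring
  have e3 : (c^2*1 + s^2*(f b) - f y) * c^2 = (cc + (1-cc)*(f b) - f y) * cc := by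
    rw [hc2, hs2]; ring
  have e4 : (s^2*1 + c^2*(f b) - f y⁻¹) * s^2 = (1 - cc + cc*(f b) - f y⁻¹) * (1-cc) := by
    rw [hc2, hs2]; ring
  nlinarith [q, e2, e3, e4]

set_option maxHeartbeats 1000000 in
lemma lower_core (f : ℝ → ℝ) (hm : OperatorMonotoneOnPos f)
    {y ss : ℝ} (hy : 1 < y) (hss : 0 < ss) (hss2 : ss < 1/(1+y)) (hnorm : f 1 = 1)
    (hfpos : ∀ x : ℝ, 0 < x → 0 < f x) :
    (1 - ss + ss*y)^2 ≤ (1 - ss) * f y + ss * y^2 * f y⁻¹ := by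
  have hy0 : (0:ℝ) < y := by linarith
  have hyinv : 0 < y⁻¹ := by positivity
  have hssy : ss * (1+y) < 1 := by
    have : ss * (1+y) < (1/(1+y)) * (1+y) := mul_lt_mul_of_pos_right hss2 (by linarith)
    rwa [one_div_mul_cancel (by linarith : (1:ℝ)+y ≠ 0)] at this
  have hss1 : ss < 1 := by nlinarith
  have hssinvy : ss < 1/y := by
    rw [lt_div_iff₀ hy0]; nlinarith
  set c := Real.sqrt (1 - ss) with hc
  set s := Real.sqrt ss with hs
  have hc2 : c^2 = 1 - ss := Real.sq_sqrt (by linarith)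
  have hs2 : s^2 = ss := Real.sq_sqrt hss.le
  have hcpos : 0 < c := Real.sqrt_pos.mpr (by linarith)
  have hspos : 0 < s := Real.sqrt_pos.mpr hss
  have hcs : c^2 + s^2 = 1 := by rw [hc2, hs2]; ring
  obtain ⟨D0, hD0_def⟩ : ∃ D : ℝ, D = 1 - ss*y - (1-ss)/y := ⟨_, rfl⟩
  have hD0 : 0 < D0 := by
    have h1 : y * D0 = (y-1)*(1 - ss*(1+y)) := by
      rw [hD0_def]; field_simp; ring
    nlinarith [mul_pos (by linarith : (0:ℝ) < y - 1) (by linarith : (0:ℝ) < 1 - ss*(1+y))]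
  obtain ⟨K, hK_def⟩ : ∃ K : ℝ, K = (y-(1-ss))*(1-ss) + (1/y-ss)*ss - 2*(1-ss)*ss := ⟨_, rfl⟩
  have hKle : K ≤ y + 2 := by
    rw [hK_def]
    have h1 : 1/y < 1 := by rw [div_lt_one hy0]; linarith
    nlinarith [mul_nonneg hss.le hss.le, mul_nonneg (by linarith : (0:ℝ) ≤ 1-ss) hss.le]
  set μ := min (min (D0/(y+2)) ((1/y - ss)/(2*(1-ss)))) (1/2) with hμ_def
  have hμa : 0 < D0/(y+2) := div_pos hD0 (by linarith)
  have hμb : 0 < (1/y - ss)/(2*(1-ss)) := div_pos (by linarith) (by linarith)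
  have hμ0 : 0 < μ := by
    apply lt_min (lt_min hμa hμb) (by norm_num)
  have hμhalf : μ ≤ 1/2 := min_le_right _ _
  have hμ1 : μ < 1 := by linarith
  have hμD : μ ≤ D0/(y+2) := le_trans (min_le_left _ _) (min_le_left _ _)
  have hμB : μ ≤ (1/y - ss)/(2*(1-ss)) := le_trans (min_le_left _ _) (min_le_right _ _)
  have hμb2 : (1-ss)*μ ≤ 1/y - ss := by
    have h1 : (1-ss)*μ ≤ (1-ss)*((1/y - ss)/(2*(1-ss))) :=
      mul_le_mul_of_nonneg_left hμB (by linarith)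
    have h2 : (1-ss)*((1/y - ss)/(2*(1-ss))) = (1/y - ss)/2 := by
      field_simp [show (1:ℝ)-ss ≠ 0 by linarith]
    rw [h2] at h1
    linarith
  have hsub : (rotM 1 0 y y⁻¹ - rotM c s 1 μ).PosSemidef := by
    rw [rot10, rotM_eq, mat2_sub]
    have ha' : 0 ≤ y - (c^2*1 + s^2*μ) := by
      rw [hc2, hs2]; nlinarith
    have hb' : 0 ≤ y⁻¹ - (s^2*1 + c^2*μ) := by
      rw [hc2, hs2]
      have : y⁻¹ = 1/y := by rw [one_div]
      rw [this]
      linarith [hμb2]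
    apply psd2 ha' hb'
    have key : (y - (c^2*1 + s^2*μ)) * (y⁻¹ - (s^2*1 + c^2*μ)) - (0 - c*s*(1-μ))^2
        = D0 - μ * K := by
      have e1 : (0 - c*s*(1-μ))^2 = (1-ss)*ss*(1-μ)^2 := by
        rw [← hc2, ← hs2]; ring
      rw [e1, hc2, hs2, hD0_def, hK_def]
      field_simp
      ring
    have h5 : μ * K ≤ μ * (y+2) := mul_le_mul_of_nonneg_left hKle hμ0.le
    have h6 : μ * (y+2) ≤ D0 := by
      rw [← le_div_iff₀ (by linarith : (0:ℝ) < y+2)] at *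
      exact hμD
    linarith [key, h5, h6]
  have hA : (rotM c s 1 μ).PosDef := pd_rot hcs (ne_of_gt hcpos) one_pos hμ0
  have hB : (rotM 1 0 y y⁻¹).PosDef := pd_rot (by norm_num) one_ne_zero hy0 hyinv
  have hyy : y ≠ y⁻¹ := by
    have : y⁻¹ < 1 := inv_lt_one_of_one_lt₀ hy
    linarith
  have hres := mono2 f hm hcs (by norm_num : (1:ℝ)^2+(0:ℝ)^2 = 1)
    (by linarith : (1:ℝ) ≠ μ) hyy hA hB hsub
  rw [rot10, rotM_eq, mat2_sub, hnorm] at hres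
  have q := quad2 hres c (s*y)
  have hfμ : 0 ≤ f μ := (hfpos μ hμ0).le
  have e3 : (f y - (c^2*1 + s^2*(f μ))) * c^2 = (f y - (1-ss) - ss*(f μ))*(1-ss) := by
    rw [hc2, hs2]; ring
  have e2 : (0 - c*s*(1 - f μ)) * c * (s*y) = -((1-ss)*ss*y*(1 - f μ)) := by
    rw [← hc2, ← hs2]; ring
  have e4 : (f y⁻¹ - (s^2*1 + c^2*(f μ))) * (s*y)^2 = (f y⁻¹ - ss - (1-ss)*(f μ))*(ss*y^2) := by
    rw [← hs2]
    rw [show c^2 = 1 - s^2 by rw [hc2, hs2]]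
    ring
  have total : 0 ≤ (1-ss)*f y + ss*y^2*f y⁻¹ - (1-ss+ss*y)^2
      - (f μ)*((1-ss)*ss*(y-1)^2) := by
    nlinarith [q, e2, e3, e4]
  nlinarith [total, mul_nonneg (mul_nonneg (mul_nonneg hfμ (by linarith : (0:ℝ) ≤ 1-ss))
    hss.le) (sq_nonneg (y-1))]

lemma upper_half (f : ℝ → ℝ) (hm : OperatorMonotoneOnPos f)
    (hsymm : ∀ t : ℝ, 0 < t → f t = t * f t⁻¹) (hnorm : f 1 = 1)
    {y : ℝ} (hy : 1 < y) : f y ≤ (1+y)/2 := by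
  by_contra h
  push_neg at h
  have hy0 : (0:ℝ) < y := by linarith
  have hP : (0:ℝ) < 1 + y := by linarith
  obtain ⟨F, hF_def⟩ : ∃ x : ℝ, x = f y := ⟨_, rfl⟩
  rw [← hF_def] at h
  have hFpos : 0 < F := by
    have : (0:ℝ) < (1+y)/2 := by linarith
    linarith
  have hfy : f y⁻¹ = F / y := by
    have h2 := hsymm y hy0
    rw [← hF_def] at h2
    field_simp at h2 ⊢
    linarith [h2]
  have hG : 0 < 2*y*F - y*(1+y) := by nlinarith
  obtain ⟨G, hG_def⟩ : ∃ x : ℝ, x = 2*y*F - y*(1+y) := ⟨_, rfl⟩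
  rw [← hG_def] at hG
  have hD : (0:ℝ) < 2*F*(1+y)*(y-1) := by
    have : (0:ℝ) < y - 1 := by linarith
    positivity
  obtain ⟨ε, hε_def⟩ : ∃ x : ℝ, x = min (1/(2*(1+y))) (G/(2*F*(1+y)*(y-1))) := ⟨_, rfl⟩
  have hε0 : 0 < ε := hε_def ▸ lt_min (by positivity) (div_pos hG hD)
  have hε1 : ε ≤ 1/(2*(1+y)) := hε_def ▸ min_le_left _ _
  have hε2 : ε ≤ G/(2*F*(1+y)*(y-1)) := hε_def ▸ min_le_right _ _
  have hεB : ε*(2*F*(1+y)*(y-1)) ≤ G := by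
    rw [← le_div_iff₀ hD]
    exact hε2
  obtain ⟨cc, hcc_def⟩ : ∃ x : ℝ, x = 1/(1+y) - ε := ⟨_, rfl⟩
  have hccP : cc*(1+y) = 1 - ε*(1+y) := by
    rw [hcc_def]
    field_simp
  have hcc0 : 0 < cc := by
    rw [hcc_def]
    have h1 : 1/(2*(1+y)) < 1/(1+y) := by
      rw [div_lt_div_iff₀ (by linarith) hP]
      nlinarith
    linarith
  have hcc2 : cc < 1/(1+y) := by rw [hcc_def]; linarith
  have key := upper_core f hm hy hcc0 hcc2 hnorm
  rw [hfy, ← hF_def] at key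
  have hFyy : (F/y)*y = F := div_mul_cancel₀ F (ne_of_gt hy0)
  have key2 : cc*F*y + (1-cc)*F ≤ y := by
    have h3 := mul_le_mul_of_nonneg_right key hy0.le
    nlinarith [h3, hFyy]
  have key3 : F*((1+y) + cc*(1+y)*(y-1)) ≤ y*(1+y) := by
    have h4 := mul_le_mul_of_nonneg_right key2 hP.le
    nlinarith [h4]
  have expand : F*((1+y) + cc*(1+y)*(y-1)) = F*(1+y) + F*(y-1)*(cc*(1+y)) := by ring
  rw [expand, hccP] at key3
  nlinarith [key3, hεB]

lemma lower_half (f : ℝ → ℝ) (hm : OperatorMonotoneOnPos f)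
    (hsymm : ∀ t : ℝ, 0 < t → f t = t * f t⁻¹) (hnorm : f 1 = 1)
    {y : ℝ} (hy : 1 < y) : 2*y/(1+y) ≤ f y := by
  by_contra h
  push_neg at h
  have hy0 : (0:ℝ) < y := by linarith
  have hP : (0:ℝ) < 1 + y := by linarith
  obtain ⟨F, hF_def⟩ : ∃ x : ℝ, x = f y := ⟨_, rfl⟩
  rw [← hF_def] at h
  have hFpos : 0 < F := by
    have := scalar_pos f hm hsymm hnorm hy0
    rw [← hF_def] at this
    exact this
  have hfy : f y⁻¹ = F / y := by
    have h2 := hsymm y hy0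
    rw [← hF_def] at h2
    field_simp at h2 ⊢
    linarith [h2]
  have hG : 0 < 2*y - F*(1+y) := by
    have h3 := (lt_div_iff₀ hP).mp h
    linarith
  obtain ⟨G, hG_def⟩ : ∃ x : ℝ, x = 2*y - F*(1+y) := ⟨_, rfl⟩
  rw [← hG_def] at hG
  have hD : (0:ℝ) < 2*(1+y)*(y-1) := by nlinarith
  obtain ⟨ε, hε_def⟩ : ∃ x : ℝ, x = min (1/(2*(1+y))) (G/(2*(1+y)*(y-1))) := ⟨_, rfl⟩
  have hε0 : 0 < ε := hε_def ▸ lt_min (by positivity) (div_pos hG hD)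
  have hε1 : ε ≤ 1/(2*(1+y)) := hε_def ▸ min_le_left _ _
  have hεB : ε*(2*(1+y)*(y-1)) ≤ G := by
    rw [← le_div_iff₀ hD]
    exact hε_def ▸ min_le_right _ _
  obtain ⟨ss, hss_def⟩ : ∃ x : ℝ, x = 1/(1+y) - ε := ⟨_, rfl⟩
  have hssP : ss*(1+y) = 1 - ε*(1+y) := by
    rw [hss_def]
    field_simp
  have hss0 : 0 < ss := by
    rw [hss_def]
    have h1 : 1/(2*(1+y)) < 1/(1+y) := by
      rw [div_lt_div_iff₀ (by linarith) hP]
      nlinarith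
    linarith
  have hss2 : ss < 1/(1+y) := by rw [hss_def]; linarith
  have key := lower_core f hm hy hss0 hss2 hnorm
    (fun x hx => scalar_pos f hm hsymm hnorm hx)
  rw [hfy, ← hF_def] at key
  have hyy : ss*y^2*(F/y) = ss*y*F := by
    field_simp
  rw [hyy] at key
  have hS : 0 < 1 - ss + ss*y := by nlinarith [mul_pos hss0 (by linarith : (0:ℝ) < y - 1)]
  have hSF : 1 - ss + ss*y ≤ F := by nlinarith [key, hS]
  have hSF2 := mul_le_mul_of_nonneg_right hSF hP.le
  have hexp : (1 - ss + ss*y)*(1+y) = (1+y) + (y-1)*(ss*(1+y)) := by ring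
  rw [hexp, hssP] at hSF2
  nlinarith [hSF2, hεB]


theorem operatorMonotone_bounds (f : ℝ → ℝ)
    (hmono : OperatorMonotoneOnPos f)
    (hsymm : ∀ t : ℝ, 0 < t → f t = t * f t⁻¹)
    (hnorm : f 1 = 1) :
    ∀ t : ℝ, 0 < t → 2 * t / (1 + t) ≤ f t ∧ f t ≤ (1 + t) / 2 := by
  intro t ht
  rcases lt_trichotomy t 1 with h | h | h
  · have hy : 1 < t⁻¹ := (one_lt_inv₀ ht).mpr h
    have hti : 0 < t⁻¹ := by positivity
    have hs := hsymm t ht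
    constructor
    · have hl := lower_half f hmono hsymm hnorm hy
      have h2 : t * (2*t⁻¹/(1+t⁻¹)) ≤ t * f t⁻¹ :=
        mul_le_mul_of_nonneg_left hl ht.le
      rw [← hs] at h2
      have h3 : t * (2*t⁻¹/(1+t⁻¹)) = 2*t/(1+t) := by
        rw [eq_div_iff (by linarith : (1:ℝ)+t ≠ 0)]
        field_simp
        ring
      linarith [h2, h3 ▸ h2]
    · have hu := upper_half f hmono hsymm hnorm hy
      have h2 : t * f t⁻¹ ≤ t * ((1+t⁻¹)/2) := mul_le_mul_of_nonneg_left hu ht.le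
      rw [← hs] at h2
      have h3 : t * ((1+t⁻¹)/2) = (1+t)/2 := by
        field_simp
        ring
      linarith [h2]
  · subst h
    rw [hnorm]
    norm_num
  · exact ⟨lower_half f hmono hsymm hnorm h, upper_half f hmono hsymm hnorm h⟩
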